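/- Let (C, s, ι) and (D, t, ȷ) be small categories each equipped with an endofunctor and a natural transformation from the identity to it, let f : C → D be a functor equipped with a natural isomorphism ψ : f∘s ⟶ t∘f such that ȷ ∗ id_f = ψ ∘ (id_f ∗ ι), and let A be an abelian category. Then for any functor T : D → A one has deg(T∘f) ≤ deg(T); if moreover f is essentially surjective on objects, then deg(T∘f) = deg(T). -/

import Mathlib

open CategoryTheory CategoryTheory.Limits

universe v u v' u' w z

variable {A : Type w} [Category.{z} A] [Abelian A]

/-- The natural transformation `T ∗ ι : T ⟶ s ⋙ T` induced by `ι : 𝟭 C ⟶ s`. -/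
def stabMap {C : Type u} [Category.{v} C] (s : C ⥤ C) (ι : 𝟭 C ⟶ s) (T : C ⥤ A) :
    T ⟶ s ⋙ T :=
  T.leftUnitor.inv ≫ Functor.whiskerRight ι T

/-- `degLE s ι d T` means `deg T ≤ d - 1`: `deg T ≤ -1` iff `T = 0`, and
`deg T ≤ d` iff `T = 0` or the cokernel of `T ∗ ι` has degree `≤ d - 1`. -/
def degLE {C : Type u} [Category.{v} C] (s : C ⥤ C) (ι : 𝟭 C ⟶ s) :
    ℕ → (C ⥤ A) → Prop
  | 0, T => IsZero T
  | d + 1, T => IsZero T ∨ degLE s ι d (cokernel (stabMap s ι T))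

/-- The degree of a functor `T : C ⥤ A`, relative to the endofunctor `s : C ⥤ C`
and natural transformation `ι : 𝟭 C ⟶ s`.  The degree takes values in
`{-1, 0, 1, …, ∞}`; we encode such a value `d` as `d + 1 : ℕ∞` (so `-1 ↦ 0`,
`∞ ↦ ⊤`), an order isomorphism, so inequalities and equalities of degrees are
faithfully represented. -/
noncomputable def deg {C : Type u} [Category.{v} C] (s : C ⥤ C) (ι : 𝟭 C ⟶ s)
    (T : C ⥤ A) : ℕ∞ :=
  sInf {e : ℕ∞ | ∃ d : ℕ, e = (d : ℕ∞) ∧ degLE s ι d T}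

/-!
Precomposition with `f` is exact, and by `hψ` it carries `T ∗ ȷ` to `(f ⋙ T) ∗ ι` up to the
isomorphism `ψ`, so it commutes with the cokernel step in the definition of the degree. Induction
on `d` then gives `degLE t j d T → degLE s ι d (f ⋙ T)`, and the converse when `f` is essentially
surjective, because then `f ⋙ -` reflects zero objects.
-/

section

variable {C : Type u} [Category.{v} C] {D : Type u'} [Category.{v'} D]

lemma degLE_of_iso (s : C ⥤ C) (ι : 𝟭 C ⟶ s) :
    ∀ (d : ℕ) {T T' : C ⥤ A}, (T ≅ T') → degLE s ι d T → degLE s ι d T'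
  | 0, _, _, e, h => h.of_iso e.symm
  | d + 1, _, _, e, h => h.imp (·.of_iso e.symm) <| degLE_of_iso s ι d <|
      cokernel.mapIso _ _ e (Functor.isoWhiskerLeft s e) (by ext; simp [stabMap])

lemma deg_le_deg_of_degLE_imp {s : C ⥤ C} {ι : 𝟭 C ⟶ s} {t : D ⥤ D} {j : 𝟭 D ⟶ t}
    {T : C ⥤ A} {T' : D ⥤ A} (h : ∀ d, degLE t j d T' → degLE s ι d T) :
    deg s ι T ≤ deg t j T' :=
  sInf_le_sInf fun _ ⟨d, hd, hT'⟩ => ⟨d, hd, h d hT'⟩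

lemma CategoryTheory.Functor.isZero_of_isZero_comp (f : C ⥤ D) [f.EssSurj] {T : D ⥤ A}
    (h : IsZero (f ⋙ T)) : IsZero T :=
  T.isZero_iff.2 fun X =>
    ((f ⋙ T).isZero_iff.1 h (f.objPreimage X)).of_iso (T.mapIso (f.objObjPreimageIso X)).symm

variable {s : C ⥤ C} {ι : 𝟭 C ⟶ s} {t : D ⥤ D} {j : 𝟭 D ⟶ t} {f : C ⥤ D}
  {ψ : s ⋙ f ≅ f ⋙ t}

noncomputable def cokernelStabMapCompIso
    (hψ : ∀ c : C, f.map (ι.app c) ≫ ψ.hom.app c = j.app (f.obj c)) (T : D ⥤ A) :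
    cokernel (stabMap s ι (f ⋙ T)) ≅ f ⋙ cokernel (stabMap t j T) :=
  cokernel.mapIso _ (Functor.whiskerLeft f (stabMap t j T)) (Iso.refl _)
      ((Functor.associator s f T).symm ≪≫ Functor.isoWhiskerRight ψ T ≪≫ Functor.associator f t T)
      (by ext c; simp [stabMap, ← T.map_comp, hψ]) ≪≫
    (PreservesCokernel.iso ((Functor.whiskeringLeft C D A).obj f) (stabMap t j T)).symm

lemma degLE_comp (hψ : ∀ c : C, f.map (ι.app c) ≫ ψ.hom.app c = j.app (f.obj c)) :
    ∀ (d : ℕ) (T : D ⥤ A), degLE t j d T → degLE s ι d (f ⋙ T)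
  | 0, _, h => ((Functor.whiskeringLeft C D A).obj f).map_isZero h
  | d + 1, T, h => h.imp ((Functor.whiskeringLeft C D A).obj f).map_isZero fun h =>
      degLE_of_iso s ι d (cokernelStabMapCompIso hψ T).symm (degLE_comp hψ d _ h)

lemma degLE_of_degLE_comp (hψ : ∀ c : C, f.map (ι.app c) ≫ ψ.hom.app c = j.app (f.obj c))
    [f.EssSurj] : ∀ (d : ℕ) (T : D ⥤ A), degLE s ι d (f ⋙ T) → degLE t j d T
  | 0, _, h => f.isZero_of_isZero_comp h
  | d + 1, T, h => h.imp f.isZero_of_isZero_comp fun h =>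
      degLE_of_degLE_comp hψ d _ (degLE_of_iso s ι d (cokernelStabMapCompIso hψ T) h)

end

/-- Statement 4: let `(C, s, ι)` and `(D, t, ȷ)` be small categories equipped with an
endofunctor and a natural transformation from the identity, let `f : C ⥤ D` be a functor
equipped with a natural isomorphism `ψ : s ⋙ f ≅ f ⋙ t` (i.e. `f ∘ s ≅ t ∘ f`) satisfying
`ȷ ∗ id_f = ψ ∘ (id_f ∗ ι)` (componentwise: `ψ_c ∘ f(ι_c) = ȷ_{f c}`), and let `A` be an
abelian category.  Then for any functor `T : D ⥤ A` we have `deg (T ∘ f) ≤ deg T`, with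
equality if `f` is essentially surjective on objects. -/
theorem deg_comp_le_and_eq_of_essSurj
    {C : Type u} [Category.{v} C] {D : Type u'} [Category.{v'} D]
    (s : C ⥤ C) (ι : 𝟭 C ⟶ s) (t : D ⥤ D) (j : 𝟭 D ⟶ t)
    (f : C ⥤ D) (ψ : s ⋙ f ≅ f ⋙ t)
    (hψ : ∀ c : C, f.map (ι.app c) ≫ ψ.hom.app c = j.app (f.obj c))
    (T : D ⥤ A) :
    deg s ι (f ⋙ T) ≤ deg t j T ∧ (f.EssSurj → deg s ι (f ⋙ T) = deg t j T) := by
  have hle : deg s ι (f ⋙ T) ≤ deg t j T := deg_le_deg_of_degLE_imp (degLE_comp hψ · T)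
  refine ⟨hle, fun _ => le_antisymm hle ?_⟩
  exact deg_le_deg_of_degLE_imp (degLE_of_degLE_comp hψ · T)
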